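/- Let n ≥ 1, let p : Fin n → ℝ² be in counterclockwise convex position, and let q : Fin n → ℝ² be such that q ∘ π is in counterclockwise convex position for some bijection π : Fin n → Fin n. Let x ∈ Fin n and let s = (s_0, …, s_{m−1}) be a maximal greedy sequence from x with m < n. Then for every label y ∈ {s_0, …, s_{m−1}} there is no bijection σ : Fin n → Fin n with σ 0 = y whose spanning path is noncrossing on both p and q; that is, no label occurring in s can be the first label of compatible paths of p and q. -/

import Mathlib

/-- Signed area determinant of two vectors in the plane. -/
def det2 (u v : ℝ × ℝ) : ℝ := u.1 * v.2 - u.2 * v.1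

/-- `p` lists points in counterclockwise convex position. -/
def CCWConvex {n : ℕ} (p : Fin n → ℝ × ℝ) : Prop :=
  ∀ i j k : Fin n, i < j → j < k → 0 < det2 (p j - p i) (p k - p i)

/-- The path visiting `f 0, f 1, …` is noncrossing: consecutive edges meet exactly at
their shared vertex, and nonconsecutive edges are disjoint. -/
def NoncrossingPath {m : ℕ} (f : Fin m → ℝ × ℝ) : Prop :=
  ∀ k l : ℕ, ∀ hk : k + 1 < m, ∀ hl : l + 1 < m, k < l →
    if l = k + 1 then
      segment ℝ (f ⟨k, by omega⟩) (f ⟨k + 1, hk⟩) ∩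
        segment ℝ (f ⟨l, by omega⟩) (f ⟨l + 1, hl⟩) = {f ⟨k + 1, hk⟩}
    else
      Disjoint (segment ℝ (f ⟨k, by omega⟩) (f ⟨k + 1, hk⟩))
        (segment ℝ (f ⟨l, by omega⟩) (f ⟨l + 1, hl⟩))

/-- `A` is a cyclic arc of `Fin n`: a set of the form `{i, i+1, …, i+t-1}` (mod `n`). -/
def IsArc {n : ℕ} (A : Set (Fin n)) : Prop :=
  ∃ i t : ℕ, t ≤ n ∧ ∀ x : Fin n, x ∈ A ↔ ∃ r < t, (x : ℕ) = (i + r) % n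

/-- `s` is a greedy sequence from the label `x`: a nonempty sequence of pairwise distinct
labels starting at `x`, each of whose prefix sets is simultaneously a cyclic arc of the
hull of `p` (i.e. an arc of `Fin n`) and of the hull of `q` (i.e. has arc preimage
under `π`). -/
def GreedySeq {n : ℕ} (π : Equiv.Perm (Fin n)) (x : Fin n)
    {m : ℕ} (s : Fin m → Fin n) : Prop :=
  0 < m ∧ Function.Injective s ∧ (∀ h : 0 < m, s ⟨0, h⟩ = x) ∧
    ∀ r : ℕ, 1 ≤ r → r ≤ m →
      IsArc {y : Fin n | ∃ j : Fin m, (j : ℕ) < r ∧ s j = y} ∧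
      IsArc (⇑π ⁻¹' {y : Fin n | ∃ j : Fin m, (j : ℕ) < r ∧ s j = y})

/-- Appending the label `ℓ` at the end of the sequence `s`. -/
def extendSeq {n m : ℕ} (s : Fin m → Fin n) (ℓ : Fin n) : Fin (m + 1) → Fin n :=
  fun j => if h : (j : ℕ) < m then s ⟨j, h⟩ else ℓ

/-- A greedy sequence is maximal if no label can be appended keeping it greedy. -/
def MaximalGreedySeq {n : ℕ} (π : Equiv.Perm (Fin n)) (x : Fin n)
    {m : ℕ} (s : Fin m → Fin n) : Prop :=
  GreedySeq π x s ∧ ¬ ∃ ℓ : Fin n, GreedySeq π x (extendSeq s ℓ)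

/-!
Every prefix of a noncrossing spanning path on points in convex position is a cyclic arc:
if the vertex `b` visited at step `k + 1` had neither cyclic neighbour among the earlier
vertices, both neighbours would be visited later, on opposite sides of the edge from the
vertex of step `k` to `b`, and the path between them would cross that edge.

Now suppose a path compatible with `p` and `q` starts in the set `S` of labels of the
greedy sequence, and let `ℓ` be its first vertex outside `S` (it exists as `|S| = m < n`).
The vertices before `ℓ` lie in `S` and together with `ℓ` form an arc of `p` and of `q`, so
`ℓ` is cyclically adjacent to `S` in both orders and `S ∪ {ℓ}` is again an arc of both.
Hence `ℓ` can be appended to the greedy sequence, contradicting maximality.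
-/

open Set

lemma det2_swap (u v : ℝ × ℝ) : det2 u v = -det2 v u := by
  simp only [det2]; ring

lemma det2_sub_rotate (a b c : ℝ × ℝ) : det2 (b - a) (c - a) = det2 (c - b) (a - b) := by
  simp only [det2, Prod.fst_sub, Prod.snd_sub]; ring

lemma div_sub_mem_Icc_of_mul_neg {a b : ℝ} (h : a * b < 0) : a / (a - b) ∈ Icc (0 : ℝ) 1 := by
  rcases mul_neg_iff.mp h with ⟨ha, hb⟩ | ⟨ha, hb⟩
  · exact ⟨div_nonneg ha.le (by linarith), (div_le_one (by linarith)).mpr (by linarith)⟩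
  · exact ⟨div_nonneg_of_nonpos ha.le (by linarith),
      (div_le_one_of_neg (by linarith)).mpr (by linarith)⟩

lemma not_disjoint_segment_of_det2_mul_neg {A B C D : ℝ × ℝ}
    (hCD : det2 (B - A) (C - A) * det2 (B - A) (D - A) < 0)
    (hAB : det2 (D - C) (A - C) * det2 (D - C) (B - C) < 0) :
    ¬ Disjoint (segment ℝ A B) (segment ℝ C D) := by
  set α := det2 (D - C) (A - C) with hα
  set β := det2 (D - C) (B - C) with hβ
  set γ := det2 (B - A) (C - A) with hγ
  set δ := det2 (B - A) (D - A) with hδ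
  have hαβ : α - β ≠ 0 := by
    rcases mul_neg_iff.mp hAB with ⟨h, h'⟩ | ⟨h, h'⟩ <;> intro hc <;> linarith
  have hγδ : γ - δ ≠ 0 := by
    rcases mul_neg_iff.mp hCD with ⟨h, h'⟩ | ⟨h, h'⟩ <;> intro hc <;> linarith
  -- The crossing point divides `AB` in the ratio `α : -β`, the signed areas of `CDA` and `CDB`.
  have hmeet : A + (α / (α - β)) • (B - A) = C + (γ / (γ - δ)) • (D - C) := by
    ext <;> simp only [Prod.fst_add, Prod.snd_add, Prod.smul_fst, Prod.smul_snd,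
      Prod.fst_sub, Prod.snd_sub, smul_eq_mul] <;> field_simp <;>
      simp only [hα, hβ, hγ, hδ, det2, Prod.fst_sub, Prod.snd_sub] <;> ring
  rw [not_disjoint_iff, segment_eq_image', segment_eq_image']
  exact ⟨_, ⟨_, div_sub_mem_Icc_of_mul_neg hAB, rfl⟩,
    _, div_sub_mem_Icc_of_mul_neg hCD, hmeet.symm⟩

lemma Fin.sbtw_or_sbtw {n : ℕ} {a b c : Fin n} (hab : a ≠ b) (hbc : b ≠ c) (hac : a ≠ c) :
    sbtw a b c ∨ sbtw a c b := by
  simp only [Fin.sbtw_iff, Fin.lt_def]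
  rw [← Fin.val_ne_iff] at hab hbc hac
  omega

namespace CCWConvex

variable {n : ℕ} {p : Fin n → ℝ × ℝ}

lemma det2_pos (hp : CCWConvex p) {a b c : Fin n} (h : sbtw a b c) :
    0 < det2 (p b - p a) (p c - p a) := by
  rcases h with ⟨hab, hbc⟩ | ⟨hbc, hca⟩ | ⟨hca, hab⟩
  · exact hp a b c hab hbc
  · rw [det2_sub_rotate]; exact hp b c a hbc hca
  · rw [det2_sub_rotate, det2_sub_rotate]; exact hp c a b hca hab

lemma not_disjoint_segment (hp : CCWConvex p) {a b u v : Fin n} (hvb : sbtw a v b)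
    (hbu : sbtw a b u) : ¬ Disjoint (segment ℝ (p a) (p b)) (segment ℝ (p u) (p v)) := by
  obtain ⟨huvb, huav⟩ : sbtw u v b ∧ sbtw u a v := by
    simp only [Fin.sbtw_iff, Fin.lt_def] at hvb hbu ⊢
    omega
  have h₁ := hp.det2_pos hbu
  have h₂ := hp.det2_pos hvb
  have h₃ := hp.det2_pos huvb
  have h₄ := hp.det2_pos huav
  rw [det2_swap] at h₂ h₄
  exact not_disjoint_segment_of_det2_mul_neg (mul_neg_of_pos_of_neg h₁ (by linarith))
    (mul_neg_of_neg_of_pos (by linarith) h₃)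

end CCWConvex

lemma val_finRotate {n : ℕ} (i : Fin n) :
    (finRotate n i : ℕ) = if (i : ℕ) + 1 = n then 0 else (i : ℕ) + 1 := by
  cases n with
  | zero => exact i.elim0
  | succ n => simp only [coe_finRotate, Fin.ext_iff, Fin.val_last, Nat.add_right_cancel_iff]

lemma Fin.sbtw_finRotate {n : ℕ} {a b : Fin n} (hab : a ≠ b) (ha : a ≠ finRotate n b) :
    sbtw a b (finRotate n b) := by
  have hb := val_finRotate b
  simp only [Fin.sbtw_iff, Fin.lt_def]
  rw [← Fin.val_ne_iff] at hab ha
  have := a.isLt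
  split_ifs at hb <;> omega

lemma Nat.exists_lt_eq_add_mod_iff {n i t : ℕ} (hi : i < n) (ht : t ≤ n) {x : ℕ} (hx : x < n) :
    (∃ r < t, x = (i + r) % n) ↔ (i ≤ x ∧ x < i + t) ∨ x + n < i + t := by
  constructor
  · rintro ⟨r, hr, rfl⟩
    rcases lt_or_ge (i + r) n with h | h
    · rw [Nat.mod_eq_of_lt h]; omega
    · rw [Nat.mod_eq_sub_mod h, Nat.mod_eq_of_lt (by omega)]; omega
  · rintro (⟨h₁, h₂⟩ | h)
    · exact ⟨x - i, by omega, by rw [Nat.add_sub_cancel' h₁, Nat.mod_eq_of_lt hx]⟩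
    · refine ⟨x + n - i, by omega, ?_⟩
      rw [Nat.add_sub_cancel' (by omega), Nat.add_mod_right, Nat.mod_eq_of_lt hx]

/-- Unwrapped form of an arc: the interval `[i, i + t)` of `ℕ` and its part beyond `n`,
shifted back by `n`. -/
lemma isArc_iff {n : ℕ} (hn : 0 < n) {A : Set (Fin n)} :
    IsArc A ↔ ∃ i < n, ∃ t ≤ n,
      ∀ x : Fin n, x ∈ A ↔ (i ≤ x ∧ (x : ℕ) < i + t) ∨ (x : ℕ) + n < i + t := by
  constructor
  · rintro ⟨i, t, ht, hA⟩
    refine ⟨i % n, Nat.mod_lt _ hn, t, ht, fun x => ?_⟩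
    rw [← Nat.exists_lt_eq_add_mod_iff (Nat.mod_lt _ hn) ht x.isLt, hA x]
    simp only [Nat.mod_add_mod]
  · rintro ⟨i, hi, t, ht, hA⟩
    exact ⟨i, t, ht, fun x => by rw [hA x, Nat.exists_lt_eq_add_mod_iff hi ht x.isLt]⟩

lemma isArc_empty {n : ℕ} : IsArc (∅ : Set (Fin n)) :=
  ⟨0, 0, Nat.zero_le _, fun x => by simp⟩

lemma isArc_singleton {n : ℕ} (y : Fin n) : IsArc ({y} : Set (Fin n)) := by
  rw [isArc_iff (Fin.pos y)]
  exact ⟨y, y.isLt, 1, Fin.pos y, fun x => by simp only [mem_singleton_iff, Fin.ext_iff]; omega⟩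

namespace IsArc

variable {n : ℕ}

lemma union_singleton {A : Set (Fin n)} {ℓ z : Fin n} (hA : IsArc A) (hℓ : ℓ ∉ A) (hz : z ∈ A)
    (hadj : finRotate n ℓ = z ∨ finRotate n z = ℓ) : IsArc (A ∪ {ℓ}) := by
  have hn := Fin.pos z
  rw [isArc_iff hn] at hA ⊢
  obtain ⟨i, hi, t, ht, hA⟩ := hA
  have hℓ' := (hA ℓ).not.mp hℓ
  have hz' := (hA z).mp hz
  have := ℓ.isLt
  have := z.isLt
  have htn : t < n := by omega
  simp only [mem_union, mem_singleton_iff, hA, Fin.ext_iff]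
  rcases hadj with h | h <;> have h := congrArg Fin.val h
  · rw [val_finRotate] at h
    exact ⟨ℓ, ℓ.isLt, t + 1, htn, fun x => by have := x.isLt; split_ifs at h <;> omega⟩
  · rw [val_finRotate] at h
    exact ⟨i, hi, t + 1, htn, fun x => by have := x.isLt; split_ifs at h <;> omega⟩

lemma exists_adjacent_mem {T : Set (Fin n)} {ℓ w : Fin n} (hT : IsArc T) (hℓ : ℓ ∈ T)
    (hw : w ∈ T) (hwℓ : w ≠ ℓ) :
    ∃ z ∈ T, z ≠ ℓ ∧ (finRotate n ℓ = z ∨ finRotate n z = ℓ) := by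
  rw [isArc_iff (Fin.pos ℓ)] at hT
  obtain ⟨i, hi, t, ht, hT⟩ := hT
  obtain ⟨c, hc⟩ := (finRotate n).surjective ℓ
  have hcv := congrArg Fin.val hc
  have hdv := val_finRotate ℓ
  rw [val_finRotate] at hcv
  have hℓ' := (hT ℓ).mp hℓ
  have hw' := (hT w).mp hw
  rw [← Fin.val_ne_iff] at hwℓ
  have := ℓ.isLt; have := w.isLt; have := c.isLt
  by_cases hdT : finRotate n ℓ ∈ T ∧ finRotate n ℓ ≠ ℓ
  · exact ⟨_, hdT.1, hdT.2, Or.inl rfl⟩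
  · rw [hT, ← Fin.val_ne_iff] at hdT
    refine ⟨c, (hT c).mpr ?_, fun h => ?_, Or.inr hc⟩
    · split_ifs at hcv hdv <;> omega
    · rw [Fin.ext_iff] at h
      split_ifs at hcv hdv <;> omega

lemma union_singleton_of_subset {S T : Set (Fin n)} {ℓ : Fin n} (hS : IsArc S)
    (hT : IsArc (T ∪ {ℓ})) (hTS : T ⊆ S) (hℓ : ℓ ∉ S) (hne : T.Nonempty) :
    IsArc (S ∪ {ℓ}) := by
  obtain ⟨w, hw⟩ := hne
  obtain ⟨z, hz, hzℓ, hadj⟩ :=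
    hT.exists_adjacent_mem (Or.inr rfl) (Or.inl hw) (fun h => hℓ (h ▸ hTS hw))
  exact hS.union_singleton hℓ (hTS (hz.resolve_right hzℓ)) hadj

end IsArc

section PrefixSet

variable {α : Type*} {m : ℕ}

def prefixSet (s : Fin m → α) (r : ℕ) : Set α :=
  {y | ∃ j : Fin m, (j : ℕ) < r ∧ s j = y}

variable (s : Fin m → α)

@[simp]
lemma prefixSet_zero : prefixSet s 0 = ∅ := by
  ext; simp [prefixSet]

lemma prefixSet_succ {r : ℕ} (hr : r < m) :
    prefixSet s (r + 1) = prefixSet s r ∪ {s ⟨r, hr⟩} := by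
  ext y
  simp only [prefixSet, mem_ofPred_eq, mem_union, mem_singleton_iff]
  constructor
  · rintro ⟨j, hj, rfl⟩
    rcases (Nat.lt_succ_iff_lt_or_eq.mp hj) with hj | hj
    · exact Or.inl ⟨j, hj, rfl⟩
    · exact Or.inr (congrArg s (Fin.ext hj))
  · rintro (⟨j, hj, rfl⟩ | rfl)
    · exact ⟨j, by omega, rfl⟩
    · exact ⟨_, Nat.lt_succ_self r, rfl⟩

lemma prefixSet_self : prefixSet s m = range s := by
  ext y
  exact ⟨fun ⟨j, _, hj⟩ => ⟨j, hj⟩, fun ⟨j, hj⟩ => ⟨j, j.isLt, hj⟩⟩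

lemma apply_mem_prefixSet_iff {s : Fin m → α} (hs : Function.Injective s) {r : ℕ} {j : Fin m} :
    s j ∈ prefixSet s r ↔ (j : ℕ) < r :=
  ⟨fun ⟨_, hi, hij⟩ => hs hij ▸ hi, fun hj => ⟨j, hj, rfl⟩⟩

lemma Equiv.preimage_prefixSet {β : Type*} (e : β ≃ α) (r : ℕ) :
    e ⁻¹' prefixSet s r = prefixSet (e.symm ∘ s) r := by
  ext y
  simp only [prefixSet, mem_preimage, mem_ofPred_eq, Function.comp_apply,
    Equiv.eq_symm_apply, eq_comm]

lemma prefixSet_extendSeq {n : ℕ} (s : Fin m → Fin n) (ℓ : Fin n) {r : ℕ} (hr : r ≤ m) :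
    prefixSet (extendSeq s ℓ) r = prefixSet s r := by
  ext y
  simp only [prefixSet, mem_ofPred_eq, extendSeq]
  constructor
  · rintro ⟨j, hj, rfl⟩
    exact ⟨⟨j, by omega⟩, hj, by rw [dif_pos (by omega)]⟩
  · rintro ⟨j, hj, rfl⟩
    exact ⟨j.castSucc, hj, dif_pos j.isLt⟩

lemma exists_prefixSet_subset_notMem {S : Set α} (h : ¬ range s ⊆ S) :
    ∃ r, ∃ hr : r < m, prefixSet s r ⊆ S ∧ s ⟨r, hr⟩ ∉ S := by
  obtain ⟨j, hj, hmin⟩ := wellFounded_lt.has_min {j | s j ∉ S}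
    (by simpa [range_subset_iff, Set.Nonempty] using h)
  refine ⟨j, j.isLt, ?_, hj⟩
  rintro _ ⟨i, hi, rfl⟩
  by_contra hiS
  exact hmin i hiS hi

end PrefixSet

lemma NoncrossingPath.disjoint {m : ℕ} {f : Fin m → ℝ × ℝ} (h : NoncrossingPath f) {k l : ℕ}
    (hk : k + 1 < m) (hl : l + 1 < m) (hkl : k + 1 < l) :
    Disjoint (segment ℝ (f ⟨k, by omega⟩) (f ⟨k + 1, hk⟩))
      (segment ℝ (f ⟨l, by omega⟩) (f ⟨l + 1, hl⟩)) := by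
  have h := h k l hk hl (by omega)
  rwa [if_neg (by omega)] at h

lemma finRotate_apply_ne_self {n : ℕ} (hn : 1 < n) (i : Fin n) : finRotate n i ≠ i := by
  intro h
  have h := congrArg Fin.val h
  rw [val_finRotate] at h
  split_ifs at h <;> omega

namespace CCWConvex

variable {n : ℕ} {p : Fin n → ℝ × ℝ} {σ : Equiv.Perm (Fin n)}

/- By `det2_pos`, `sbtw a b c` says that `p c` lies to the left of the line from `p a` to `p b`;
an edge of the path whose ends lie on different sides would cross the edge from `p a` to `p b`. -/
lemma sbtw_iff_sbtw_succ (hp : CCWConvex p) (hσ : NoncrossingPath (p ∘ σ)) {k j : ℕ}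
    (hk : k + 1 < n) (hj : j + 1 < n) (hkj : k + 1 < j) :
    sbtw (σ ⟨k, by omega⟩) (σ ⟨k + 1, hk⟩) (σ ⟨j, by omega⟩) ↔
      sbtw (σ ⟨k, by omega⟩) (σ ⟨k + 1, hk⟩) (σ ⟨j + 1, hj⟩) := by
  have hdisj := hσ.disjoint hk hj hkj
  simp only [Function.comp_apply] at hdisj
  have hne : ∀ {i i' : ℕ} (hi : i < n) (hi' : i' < n), i ≠ i' → σ ⟨i, hi⟩ ≠ σ ⟨i', hi'⟩ :=
    fun _ _ h he => h (Fin.ext_iff.mp (σ.injective he))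
  constructor
  · intro hu
    by_contra hv
    refine hp.not_disjoint_segment ?_ hu hdisj
    exact (Fin.sbtw_or_sbtw (hne _ _ (by omega)) (hne _ _ (by omega))
      (hne _ _ (by omega))).resolve_left hv
  · intro hv
    by_contra hu
    rw [segment_symm ℝ (p (σ ⟨j, _⟩))] at hdisj
    refine hp.not_disjoint_segment ?_ hv hdisj
    exact (Fin.sbtw_or_sbtw (hne _ _ (by omega)) (hne _ _ (by omega))
      (hne _ _ (by omega))).resolve_left hu

lemma sbtw_iff_of_noncrossingPath (hp : CCWConvex p) (hσ : NoncrossingPath (p ∘ σ)) {k : ℕ}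
    (hk : k + 1 < n) {e f : Fin n} (he : k + 1 < e) (hf : k + 1 < f) :
    sbtw (σ ⟨k, by omega⟩) (σ ⟨k + 1, hk⟩) (σ e) ↔
      sbtw (σ ⟨k, by omega⟩) (σ ⟨k + 1, hk⟩) (σ f) := by
  have hk2 : k + 2 < n := by omega
  suffices key : ∀ j (hj : j < n), k + 2 ≤ j →
      (sbtw (σ ⟨k, by omega⟩) (σ ⟨k + 1, hk⟩) (σ ⟨k + 2, hk2⟩) ↔
        sbtw (σ ⟨k, by omega⟩) (σ ⟨k + 1, hk⟩) (σ ⟨j, hj⟩)) from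
    (key e e.isLt he).symm.trans (key f f.isLt hf)
  intro j hj hkj
  induction j, hkj using Nat.le_induction with
  | base => rfl
  | succ j hkj ih => exact (ih (by omega)).trans (hp.sbtw_iff_sbtw_succ hσ hk hj (by omega))

lemma isArc_prefixSet (hp : CCWConvex p) (hσ : NoncrossingPath (p ∘ σ)) {r : ℕ} (hr : r ≤ n) :
    IsArc (prefixSet σ r) := by
  induction r with
  | zero => simpa using isArc_empty
  | succ r ih =>
    rw [prefixSet_succ σ hr]
    rcases r with _ | k
    · simpa using isArc_singleton _
    set P := prefixSet σ (k + 1)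
    set a := σ ⟨k, by omega⟩
    set b := σ ⟨k + 1, hr⟩
    have hbP : b ∉ P := by simp [P, b, apply_mem_prefixSet_iff σ.injective]
    have haP : a ∈ P := by simp [P, a, apply_mem_prefixSet_iff σ.injective]
    -- Otherwise both cyclic neighbours of `b` are visited after `b`, on opposite sides of `ab`.
    by_contra hnot
    have hadj : ∀ z ∈ P, finRotate n b ≠ z ∧ finRotate n z ≠ b := fun z hz =>
      ⟨fun h => hnot (ih (by omega) |>.union_singleton hbP hz (Or.inl h)),
        fun h => hnot (ih (by omega) |>.union_singleton hbP hz (Or.inr h))⟩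
    have hlate : ∀ z ∉ P, z ≠ b → k + 1 < (σ.symm z : ℕ) := by
      intro z hz hzb
      rw [← σ.apply_symm_apply z, apply_mem_prefixSet_iff σ.injective] at hz
      have : (σ.symm z : ℕ) ≠ k + 1 := fun h => hzb (σ.symm_apply_eq.mp (Fin.ext h))
      omega
    obtain ⟨c, hc⟩ := (finRotate n).surjective b
    have hab : a ≠ b := fun h => hbP (h ▸ haP)
    have hac : a ≠ c := fun h => (hadj a haP).2 (h ▸ hc)
    have had : a ≠ finRotate n b := fun h => (hadj a haP).1 h.symm
    have hrot := finRotate_apply_ne_self (n := n) (by omega)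
    have hcb : c ≠ b := fun h => hrot b (h ▸ hc)
    have hside := hp.sbtw_iff_of_noncrossingPath hσ hr
      (hlate _ (fun h => (hadj _ h).1 rfl) (hrot b)) (hlate c (fun h => (hadj c h).2 hc) hcb)
    simp only [Equiv.apply_symm_apply] at hside
    have hacb : sbtw a c b := hc ▸ Fin.sbtw_finRotate hac (hc ▸ hab)
    exact sbtw_asymm (hside.mp (Fin.sbtw_finRotate hab had)) (sbtw_cyclic_left hacb)

lemma isArc_union_singleton (hp : CCWConvex p) (hσ : NoncrossingPath (p ∘ σ))
    {S : Set (Fin n)} (hS : IsArc S) {r : ℕ} (hr : r < n) (hr0 : 0 < r)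
    (hsub : prefixSet σ r ⊆ S) (hℓ : σ ⟨r, hr⟩ ∉ S) : IsArc (S ∪ {σ ⟨r, hr⟩}) :=
  hS.union_singleton_of_subset (prefixSet_succ σ hr ▸ hp.isArc_prefixSet hσ hr) hsub hℓ
    ⟨σ ⟨0, by omega⟩, (apply_mem_prefixSet_iff σ.injective).mpr hr0⟩

end CCWConvex

lemma extendSeq_eq_snoc {n m : ℕ} (s : Fin m → Fin n) (ℓ : Fin n) :
    extendSeq s ℓ = Fin.snoc s ℓ := by
  funext j
  simp only [extendSeq, Fin.snoc]
  split_ifs <;> rfl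

lemma GreedySeq.extend {n : ℕ} {π : Equiv.Perm (Fin n)} {x : Fin n} {m : ℕ}
    {s : Fin m → Fin n} {ℓ : Fin n} (hs : GreedySeq π x s) (hℓ : ℓ ∉ range s)
    (hp : IsArc (range s ∪ {ℓ})) (hq : IsArc (π ⁻¹' (range s ∪ {ℓ}))) :
    GreedySeq π x (extendSeq s ℓ) := by
  obtain ⟨hm, hinj, hx, harc⟩ := hs
  refine ⟨m.succ_pos, ?_, fun _ => ?_, fun r hr1 hr => ?_⟩
  · rw [extendSeq_eq_snoc]
    exact Fin.snoc_injective_of_injective hinj hℓ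
  · rw [← hx hm]
    exact dif_pos hm
  · change IsArc (prefixSet _ r) ∧ IsArc (π ⁻¹' prefixSet _ r)
    rcases Nat.le_succ_iff.mp hr with hr | rfl
    · rw [prefixSet_extendSeq s ℓ hr]
      exact harc r hr1 hr
    · rw [prefixSet_succ _ m.lt_succ_self, prefixSet_extendSeq s ℓ le_rfl, prefixSet_self]
      rw [show extendSeq s ℓ ⟨m, _⟩ = ℓ from dif_neg (lt_irrefl m)]
      exact ⟨hp, hq⟩

theorem no_start_in_short_greedy {n : ℕ} (hn : 1 ≤ n)
    (p q : Fin n → ℝ × ℝ) (hp : CCWConvex p)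
    (π : Equiv.Perm (Fin n)) (hq : CCWConvex (q ∘ π))
    (x : Fin n) (m : ℕ) (s : Fin m → Fin n)
    (hmax : MaximalGreedySeq π x s) (hshort : m < n) :
    ∀ y : Fin n, (∃ j : Fin m, s j = y) →
      ¬ ∃ σ : Equiv.Perm (Fin n), σ ⟨0, by omega⟩ = y ∧
          NoncrossingPath (p ∘ σ) ∧ NoncrossingPath (q ∘ σ) := by
  rintro y ⟨j, rfl⟩ ⟨σ, hσ0, hσp, hσq⟩
  obtain ⟨hs, hmaximal⟩ := hmax
  have hσq' : NoncrossingPath ((q ∘ π) ∘ (σ.trans π.symm)) := by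
    simpa [Function.comp_def] using hσq
  have hleave : ¬ range σ ⊆ range s := fun h => by
    have := Fintype.card_le_of_surjective s fun z => h ⟨σ.symm z, σ.apply_symm_apply z⟩
    simp only [Fintype.card_fin] at this
    omega
  obtain ⟨r, hr, hsub, hℓ⟩ := exists_prefixSet_subset_notMem σ hleave
  have hr0 : 0 < r := Nat.pos_of_ne_zero fun h => by subst h; exact hℓ (hσ0 ▸ ⟨j, rfl⟩)
  have harc : IsArc (range s) ∧ IsArc (π ⁻¹' range s) := by
    rw [← prefixSet_self]
    exact hs.2.2.2 m hs.1 le_rfl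
  refine hmaximal ⟨σ ⟨r, hr⟩, hs.extend hℓ (hp.isArc_union_singleton hσp harc.1 hr hr0 hsub hℓ) ?_⟩
  have hsubq : prefixSet (σ.trans π.symm) r ⊆ π ⁻¹' range s := by
    rw [Equiv.coe_trans, ← Equiv.preimage_prefixSet]
    exact preimage_mono hsub
  have hqarc := hq.isArc_union_singleton hσq' harc.2 hr hr0 hsubq (by simpa using hℓ)
  convert hqarc using 2
  ext z
  simp [Equiv.eq_symm_apply]
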